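/- For every integer n ≥ 9 there exists a convex geometric graph G on 2n + 2 vertices (a disjoint union of two stars S_n) such that |DJ(G)| = n² and (1/2)·Σ_{v ∈ V(G)} C(deg v, 3) = C(n,3) > n²; in particular, the inequality |DJ(G)| ≥ (1/2)·Σ_{v ∈ V(G)} C(deg v, 3) fails for some convex geometric graph. -/

import Mathlib

open scoped Classical

noncomputable section

abbrev Pt : Type := EuclideanSpace ℝ (Fin 2)

instance : Fact (Module.finrank ℝ Pt = 2) := ⟨finrank_euclideanSpace_fin⟩

noncomputable instance : Module.Oriented ℝ Pt (Fin 2) :=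
  ⟨(EuclideanSpace.basisFun (Fin 2) ℝ).toBasis.orientation⟩

/-- A (combinatorial datum of a) geometric graph: a finite set of vertices (points of the
plane) together with a finite set of edges (unordered pairs of points). -/
structure GeomGraph where
  verts : Finset Pt
  edges : Finset (Sym2 Pt)

/-- `G` is a geometric graph: edges are non-degenerate pairs of vertices, and the vertices
are in general position (no three collinear). -/
def GeomGraph.IsGeometric (G : GeomGraph) : Prop :=
  (∀ e ∈ G.edges, ¬ e.IsDiag ∧ ∀ p ∈ e, p ∈ G.verts) ∧
  ∀ p ∈ G.verts, ∀ q ∈ G.verts, ∀ r ∈ G.verts,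
    p ≠ q → p ≠ r → q ≠ r → ¬ Collinear ℝ ({p, q, r} : Set Pt)

/-- The closed straight-line segment realizing an edge. -/
def edgeSeg (e : Sym2 Pt) : Set Pt :=
  Sym2.lift ⟨fun u v => segment ℝ u v, fun u v => segment_symm ℝ u v⟩ e

/-- Two edges are disjoint if their closed segments do not intersect. -/
def EdgesDisjoint (e f : Sym2 Pt) : Prop := edgeSeg e ∩ edgeSeg f = ∅

/-- `DJedge G e` is the set of edges of `G` disjoint from `e`. -/
def DJedge (G : GeomGraph) (e : Sym2 Pt) : Finset (Sym2 Pt) :=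
  G.edges.filter (fun f => EdgesDisjoint e f)

/-- `DJpairs G` is the set of unordered pairs of disjoint edges of `G`. -/
def DJpairs (G : GeomGraph) : Finset (Sym2 (Sym2 Pt)) :=
  G.edges.sym2.filter (fun pr => ∃ e f, pr = s(e, f) ∧ EdgesDisjoint e f)

/-- The neighborhood of a vertex. -/
def nbhd (G : GeomGraph) (v : Pt) : Finset Pt :=
  G.verts.filter (fun w => s(v, w) ∈ G.edges)

/-- The degree of a vertex. -/
def deg (G : GeomGraph) (v : Pt) : ℕ := (nbhd G v).card

/-- A geometric graph is locally convex if every vertex lies outside the convex hull of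
its neighborhood. -/
def GeomGraph.LocallyConvex (G : GeomGraph) : Prop :=
  ∀ v ∈ G.verts, v ∉ convexHull ℝ (nbhd G v : Set Pt)

/-- The oriented angle `∠ x y z ∈ (-π, π]`, measured counterclockwise from the ray `yx`
to the ray `yz`. -/
def oangle (x y z : Pt) : ℝ := (EuclideanGeometry.oangle x y z).toReal



/-! ### Auxiliary construction: points on the parabola -/

noncomputable def pp (t : ℝ) : Pt := WithLp.toLp 2 ![t, t ^ 2]

lemma pp_apply0 (t : ℝ) : pp t 0 = t := rfl
lemma pp_apply1 (t : ℝ) : pp t 1 = t ^ 2 := rfl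

lemma pp_inj : Function.Injective pp := fun a b h => by
  have := congrArg (· 0) h
  simpa [pp_apply0] using this

lemma pp_not_collinear {a b c : ℝ} (hab : a ≠ b) (hac : a ≠ c) (hbc : b ≠ c) :
    ¬ Collinear ℝ ({pp a, pp b, pp c} : Set Pt) := by
  intro h
  rw [collinear_iff_of_mem (Set.mem_insert _ _)] at h
  obtain ⟨v, hv⟩ := h
  obtain ⟨rb, hrb⟩ := hv (pp b) (by simp)
  obtain ⟨rc, hrc⟩ := hv (pp c) (by simp)
  have e1 : b - a = rb * v 0 := by
    have := congrArg (· 0) hrb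
    simp only [pp_apply0, vadd_eq_add, PiLp.add_apply, PiLp.smul_apply, smul_eq_mul] at this
    linarith
  have e2 : b ^ 2 - a ^ 2 = rb * v 1 := by
    have := congrArg (· 1) hrb
    simp only [pp_apply1, vadd_eq_add, PiLp.add_apply, PiLp.smul_apply, smul_eq_mul] at this
    linarith
  have e3 : c - a = rc * v 0 := by
    have := congrArg (· 0) hrc
    simp only [pp_apply0, vadd_eq_add, PiLp.add_apply, PiLp.smul_apply, smul_eq_mul] at this
    linarith
  have e4 : c ^ 2 - a ^ 2 = rc * v 1 := by
    have := congrArg (· 1) hrc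
    simp only [pp_apply1, vadd_eq_add, PiLp.add_apply, PiLp.smul_apply, smul_eq_mul] at this
    linarith
  have key : (b - a) * (c - a) * (c - b) = 0 := by
    linear_combination (c ^ 2 - a ^ 2) * e1 + rb * v 0 * e4 - (b ^ 2 - a ^ 2) * e3 - rc * v 0 * e2
  rcases mul_eq_zero.mp key with h | h
  · rcases mul_eq_zero.mp h with h | h
    · exact hab (sub_eq_zero.mp h).symm
    · exact hac (sub_eq_zero.mp h).symm
  · exact hbc (sub_eq_zero.mp h).symm

lemma pp_not_mem_hull (t : ℝ) (A : Set Pt) (hA : ∀ x ∈ A, ∃ s : ℝ, s ≠ t ∧ x = pp s) :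
    pp t ∉ convexHull ℝ A := by
  have hlin : IsLinearMap ℝ (fun x : Pt => x 1 - 2 * t * x 0) := by
    constructor
    · intro x y; simp only [PiLp.add_apply]; ring
    · intro c x; simp only [PiLp.smul_apply, smul_eq_mul]; ring
  have hsub : A ⊆ {x : Pt | -(t ^ 2) < x 1 - 2 * t * x 0} := by
    intro x hx
    obtain ⟨s, hs, rfl⟩ := hA x hx
    simp only [Set.mem_setOf_eq, pp_apply0, pp_apply1]
    have h0 : s - t ≠ 0 := sub_ne_zero.mpr hs
    have h1 : 0 < (s - t) ^ 2 := by positivity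
    nlinarith
  intro hmem
  have := convexHull_min hsub (convex_halfSpace_gt hlin _) hmem
  simp only [Set.mem_setOf_eq, pp_apply0, pp_apply1] at this
  nlinarith

lemma seg_le {u v : Pt} {m : ℝ} (hu : u 0 ≤ m) (hv : v 0 ≤ m) {p : Pt}
    (hp : p ∈ segment ℝ u v) : p 0 ≤ m := by
  obtain ⟨a, b, ha, hb, hab, rfl⟩ := hp
  have h : (a • u + b • v) 0 = a * u 0 + b * v 0 := by
    simp [PiLp.add_apply, PiLp.smul_apply, smul_eq_mul]
  rw [h]
  have hm : a * m + b * m = m := by rw [← add_mul, hab, one_mul]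
  nlinarith [mul_le_mul_of_nonneg_left hu ha, mul_le_mul_of_nonneg_left hv hb]

lemma seg_gt {u v : Pt} {m : ℝ} (hu : m < u 0) (hv : m < v 0) {p : Pt}
    (hp : p ∈ segment ℝ u v) : m < p 0 := by
  obtain ⟨a, b, ha, hb, hab, rfl⟩ := hp
  have h : (a • u + b • v) 0 = a * u 0 + b * v 0 := by
    simp [PiLp.add_apply, PiLp.smul_apply, smul_eq_mul]
  rw [h]
  rcases eq_or_lt_of_le ha with hle | hlt
  · have hb1 : b = 1 := by linarith
    rw [← hle, hb1]; simpa using hv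
  · have hm : a * m + b * m = m := by rw [← add_mul, hab, one_mul]
    nlinarith [mul_lt_mul_of_pos_left hu hlt, mul_le_mul_of_nonneg_left hv.le hb]

lemma edgeSeg_mk (x y : Pt) : edgeSeg s(x, y) = segment ℝ x y := rfl

lemma edges_disjoint_of_sep {x y z w : Pt} {m : ℝ}
    (hx : x 0 ≤ m) (hy : y 0 ≤ m) (hz : m < z 0) (hw : m < w 0) :
    EdgesDisjoint s(x, y) s(z, w) := by
  rw [EdgesDisjoint, edgeSeg_mk, edgeSeg_mk, Set.eq_empty_iff_forall_notMem]
  rintro p ⟨h1, h2⟩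
  exact absurd (seg_le hx hy h1) (not_le.mpr (seg_gt hz hw h2))

lemma not_edges_disjoint_left (c x y : Pt) : ¬ EdgesDisjoint s(c, x) s(c, y) := by
  rw [EdgesDisjoint, edgeSeg_mk, edgeSeg_mk]
  intro h
  have : c ∈ segment ℝ c x ∩ segment ℝ c y :=
    ⟨left_mem_segment ℝ c x, left_mem_segment ℝ c y⟩
  rw [h] at this; exact this

lemma choose_three_gt (n : ℕ) (hn : 9 ≤ n) : n ^ 2 < n.choose 3 := by
  obtain ⟨m, rfl⟩ : ∃ m, n = m + 9 := ⟨n - 9, by omega⟩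
  have h := Nat.descFactorial_eq_factorial_mul_choose (m + 9) 3
  have hd : (m + 9).descFactorial 3 = (m + 7) * ((m + 8) * (m + 9)) := by
    rw [show (3 : ℕ) = 2 + 1 from rfl, Nat.descFactorial_succ, Nat.descFactorial_succ,
      Nat.descFactorial_one, show m + 9 - 2 = m + 7 from by omega,
      show m + 9 - 1 = m + 8 from by omega]
  rw [hd, show Nat.factorial 3 = 6 from rfl] at h
  nlinarith [h]

/-! ### The two-star construction -/

noncomputable def qq (k : ℕ) : Pt := pp k

noncomputable def Vone (n : ℕ) : Finset Pt := (Finset.range (n + 1)).image qq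
noncomputable def Vtwo (n : ℕ) : Finset Pt := (Finset.Icc (n + 1) (2 * n + 1)).image qq
noncomputable def cone : Pt := qq 0
noncomputable def ctwo (n : ℕ) : Pt := qq (n + 1)
noncomputable def Eone (n : ℕ) : Finset (Sym2 Pt) :=
  ((Vone n).erase cone).image (fun w => s(cone, w))
noncomputable def Etwo (n : ℕ) : Finset (Sym2 Pt) :=
  ((Vtwo n).erase (ctwo n)).image (fun w => s(ctwo n, w))
noncomputable def GG (n : ℕ) : GeomGraph := ⟨Vone n ∪ Vtwo n, Eone n ∪ Etwo n⟩

lemma qq_inj : Function.Injective qq := fun a b h => Nat.cast_injective (pp_inj h)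

lemma qq_zero (k : ℕ) : qq k 0 = (k : ℝ) := rfl

lemma hb1 {n : ℕ} {x : Pt} (hx : x ∈ Vone n) : x 0 ≤ (n : ℝ) := by
  obtain ⟨k, hk, rfl⟩ := Finset.mem_image.mp hx
  rw [qq_zero]
  exact Nat.cast_le.mpr (Nat.lt_succ_iff.mp (Finset.mem_range.mp hk))

lemma hb2 {n : ℕ} {x : Pt} (hx : x ∈ Vtwo n) : (n : ℝ) + 1 ≤ x 0 := by
  obtain ⟨k, hk, rfl⟩ := Finset.mem_image.mp hx
  rw [qq_zero]
  exact_mod_cast (Finset.mem_Icc.mp hk).1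

lemma cone_mem (n : ℕ) : cone ∈ Vone n :=
  Finset.mem_image.mpr ⟨0, Finset.mem_range.mpr (Nat.succ_pos n), rfl⟩

lemma ctwo_mem (n : ℕ) : ctwo n ∈ Vtwo n :=
  Finset.mem_image.mpr ⟨n + 1, Finset.mem_Icc.mpr ⟨le_rfl, by omega⟩, rfl⟩

lemma ne12 {n : ℕ} {x y : Pt} (hx : x ∈ Vone n) (hy : y ∈ Vtwo n) : x ≠ y := by
  intro h
  have h1 := hb1 hx
  have h2 := hb2 hy
  rw [h] at h1
  linarith

lemma disjV (n : ℕ) : Disjoint (Vone n) (Vtwo n) :=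
  Finset.disjoint_left.mpr fun x hx hy => (ne12 hx hy) rfl

lemma cardV1 (n : ℕ) : (Vone n).card = n + 1 := by
  rw [Vone, Finset.card_image_of_injective _ qq_inj, Finset.card_range]

lemma cardV2 (n : ℕ) : (Vtwo n).card = n + 1 := by
  rw [Vtwo, Finset.card_image_of_injective _ qq_inj, Nat.card_Icc]
  omega

lemma notE1E2 {n : ℕ} {e : Sym2 Pt} (h1 : e ∈ Eone n) (h2 : e ∈ Etwo n) : False := by
  obtain ⟨w, hw, rfl⟩ := Finset.mem_image.mp h1
  obtain ⟨w', hw', he⟩ := Finset.mem_image.mp h2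
  rcases Sym2.eq_iff.mp he with ⟨h, -⟩ | ⟨h, -⟩
  · exact ne12 (cone_mem n) (ctwo_mem n) h.symm
  · exact ne12 (Finset.mem_of_mem_erase hw) (ctwo_mem n) h.symm

lemma nbhd_cone (n : ℕ) : nbhd (GG n) cone = (Vone n).erase cone := by
  ext w
  simp only [nbhd, Finset.mem_filter]
  constructor
  · rintro ⟨-, he⟩
    rcases Finset.mem_union.mp he with h | h
    · obtain ⟨u, hu, hu2⟩ := Finset.mem_image.mp h
      rcases Sym2.eq_iff.mp hu2.symm with ⟨-, h2⟩ | ⟨h1, -⟩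
      · rwa [← h2] at hu
      · exact absurd h1.symm (Finset.ne_of_mem_erase hu)
    · obtain ⟨u, hu, hu2⟩ := Finset.mem_image.mp h
      rcases Sym2.eq_iff.mp hu2.symm with ⟨h1, -⟩ | ⟨h1, -⟩
      · exact absurd h1 (ne12 (cone_mem n) (ctwo_mem n))
      · exact absurd h1 (ne12 (cone_mem n) (Finset.mem_of_mem_erase hu))
  · intro hw
    refine ⟨Finset.mem_union_left _ (Finset.mem_of_mem_erase hw), ?_⟩
    exact Finset.mem_union_left _ (Finset.mem_image.mpr ⟨w, hw, rfl⟩)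

lemma nbhd_ctwo (n : ℕ) : nbhd (GG n) (ctwo n) = (Vtwo n).erase (ctwo n) := by
  ext w
  simp only [nbhd, Finset.mem_filter]
  constructor
  · rintro ⟨-, he⟩
    rcases Finset.mem_union.mp he with h | h
    · obtain ⟨u, hu, hu2⟩ := Finset.mem_image.mp h
      rcases Sym2.eq_iff.mp hu2.symm with ⟨h1, -⟩ | ⟨h1, -⟩
      · exact absurd h1.symm (ne12 (cone_mem n) (ctwo_mem n))
      · exact absurd h1.symm (ne12 (Finset.mem_of_mem_erase hu) (ctwo_mem n))
    · obtain ⟨u, hu, hu2⟩ := Finset.mem_image.mp h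
      rcases Sym2.eq_iff.mp hu2.symm with ⟨-, h2⟩ | ⟨h1, -⟩
      · rwa [← h2] at hu
      · exact absurd h1.symm (Finset.ne_of_mem_erase hu)
  · intro hw
    refine ⟨Finset.mem_union_right _ (Finset.mem_of_mem_erase hw), ?_⟩
    exact Finset.mem_union_right _ (Finset.mem_image.mpr ⟨w, hw, rfl⟩)

lemma nbhd_leaf1 {n : ℕ} {w : Pt} (hw : w ∈ (Vone n).erase cone) :
    nbhd (GG n) w = {cone} := by
  have hwV : w ∈ Vone n := Finset.mem_of_mem_erase hw
  ext u
  simp only [nbhd, Finset.mem_filter, Finset.mem_singleton]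
  constructor
  · rintro ⟨-, he⟩
    rcases Finset.mem_union.mp he with h | h
    · obtain ⟨x, hx, hx2⟩ := Finset.mem_image.mp h
      rcases Sym2.eq_iff.mp hx2.symm with ⟨h1, -⟩ | ⟨-, h2⟩
      · exact absurd h1 (Finset.ne_of_mem_erase hw)
      · exact h2
    · obtain ⟨x, hx, hx2⟩ := Finset.mem_image.mp h
      rcases Sym2.eq_iff.mp hx2.symm with ⟨h1, -⟩ | ⟨h1, -⟩
      · exact absurd h1 (ne12 hwV (ctwo_mem n))
      · exact absurd h1 (ne12 hwV (Finset.mem_of_mem_erase hx))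
  · rintro rfl
    refine ⟨Finset.mem_union_left _ (cone_mem n), ?_⟩
    refine Finset.mem_union_left _ (Finset.mem_image.mpr ⟨w, hw, ?_⟩)
    exact Sym2.eq_swap

lemma nbhd_leaf2 {n : ℕ} {w : Pt} (hw : w ∈ (Vtwo n).erase (ctwo n)) :
    nbhd (GG n) w = {ctwo n} := by
  have hwV : w ∈ Vtwo n := Finset.mem_of_mem_erase hw
  ext u
  simp only [nbhd, Finset.mem_filter, Finset.mem_singleton]
  constructor
  · rintro ⟨-, he⟩
    rcases Finset.mem_union.mp he with h | h
    · obtain ⟨x, hx, hx2⟩ := Finset.mem_image.mp h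
      rcases Sym2.eq_iff.mp hx2.symm with ⟨h1, -⟩ | ⟨h1, -⟩
      · exact absurd h1.symm (ne12 (cone_mem n) hwV)
      · exact absurd h1.symm (ne12 (Finset.mem_of_mem_erase hx) hwV)
    · obtain ⟨x, hx, hx2⟩ := Finset.mem_image.mp h
      rcases Sym2.eq_iff.mp hx2.symm with ⟨h1, -⟩ | ⟨-, h2⟩
      · exact absurd h1 (Finset.ne_of_mem_erase hw)
      · exact h2
  · rintro rfl
    refine ⟨Finset.mem_union_right _ (ctwo_mem n), ?_⟩
    refine Finset.mem_union_right _ (Finset.mem_image.mpr ⟨w, hw, ?_⟩)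
    exact Sym2.eq_swap

lemma cardE1 (n : ℕ) : (Eone n).card = n := by
  have hinj : Set.InjOn (fun w => s(cone, w)) ((Vone n).erase cone) := by
    intro w hw w' hw' h
    rcases Sym2.eq_iff.mp h with ⟨-, h2⟩ | ⟨h1, -⟩
    · exact h2
    · exact absurd h1.symm (Finset.ne_of_mem_erase (Finset.mem_coe.mp hw'))
  rw [Eone, Finset.card_image_of_injOn hinj, Finset.card_erase_of_mem (cone_mem n), cardV1,
    Nat.add_sub_cancel]

lemma cardE2 (n : ℕ) : (Etwo n).card = n := by
  have hinj : Set.InjOn (fun w => s(ctwo n, w)) ((Vtwo n).erase (ctwo n)) := by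
    intro w hw w' hw' h
    rcases Sym2.eq_iff.mp h with ⟨-, h2⟩ | ⟨h1, -⟩
    · exact h2
    · exact absurd h1.symm (Finset.ne_of_mem_erase (Finset.mem_coe.mp hw'))
  rw [Etwo, Finset.card_image_of_injOn hinj, Finset.card_erase_of_mem (ctwo_mem n), cardV2,
    Nat.add_sub_cancel]

lemma disjE12 {n : ℕ} {e f : Sym2 Pt} (he : e ∈ Eone n) (hf : f ∈ Etwo n) :
    EdgesDisjoint e f := by
  obtain ⟨w, hw, rfl⟩ := Finset.mem_image.mp he
  obtain ⟨w', hw', rfl⟩ := Finset.mem_image.mp hf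
  refine edges_disjoint_of_sep (m := (n : ℝ) + 1 / 2) ?_ ?_ ?_ ?_
  · rw [show cone 0 = ((0 : ℕ) : ℝ) from rfl]
    push_cast
    positivity
  · linarith [hb1 (Finset.mem_of_mem_erase hw)]
  · rw [show ctwo n 0 = ((n + 1 : ℕ) : ℝ) from rfl]
    push_cast
    linarith
  · linarith [hb2 (Finset.mem_of_mem_erase hw')]

lemma DJ_eq (n : ℕ) :
    DJpairs (GG n) = ((Eone n) ×ˢ (Etwo n)).image (fun ef => s(ef.1, ef.2)) := by
  ext pr
  simp only [DJpairs, Finset.mem_filter, Finset.mem_image, Finset.mem_product, Prod.exists]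
  constructor
  · rintro ⟨hpr, e, f, rfl, hdisj⟩
    have hef := Finset.mk_mem_sym2_iff.mp hpr
    have heu := hef.1
    have hfu := hef.2
    rcases Finset.mem_union.mp heu with he | he <;> rcases Finset.mem_union.mp hfu with hf | hf
    · exfalso
      obtain ⟨w, hw, rfl⟩ := Finset.mem_image.mp he
      obtain ⟨w', hw', rfl⟩ := Finset.mem_image.mp hf
      exact not_edges_disjoint_left _ _ _ hdisj
    · exact ⟨e, f, ⟨he, hf⟩, rfl⟩
    · exact ⟨f, e, ⟨hf, he⟩, Sym2.eq_swap.symm⟩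
    · exfalso
      obtain ⟨w, hw, rfl⟩ := Finset.mem_image.mp he
      obtain ⟨w', hw', rfl⟩ := Finset.mem_image.mp hf
      exact not_edges_disjoint_left _ _ _ hdisj
  · rintro ⟨e, f, ⟨he, hf⟩, rfl⟩
    refine ⟨Finset.mk_mem_sym2_iff.mpr ⟨Finset.mem_union_left _ he, Finset.mem_union_right _ hf⟩,
      e, f, rfl, disjE12 he hf⟩

lemma cardDJ (n : ℕ) : (DJpairs (GG n)).card = n ^ 2 := by
  rw [DJ_eq, Finset.card_image_of_injOn, Finset.card_product, cardE1, cardE2, sq]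
  rintro ⟨e, f⟩ hef ⟨e', f'⟩ hef' h
  simp only [Finset.mem_coe, Finset.mem_product] at hef hef'
  rcases Sym2.eq_iff.mp h with ⟨h1, h2⟩ | ⟨h1, h2⟩
  · exact Prod.ext h1 h2
  · exfalso
    have hE : e ∈ Etwo n := by rw [show e = f' from h1]; exact hef'.2
    exact notE1E2 hef.1 hE

/-- For every `n ≥ 9` there is a convex geometric graph on `2n + 2` vertices, a disjoint
union of two stars `S_n`, with `|DJ(G)| = n²` and `(1/2)·Σ_v C(deg v, 3) = C(n,3) > n²`;
in particular the inequality `|DJ(G)| ≥ (1/2)·Σ_v C(deg v, 3)` fails for this graph. -/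
theorem exists_convex_graph_two_stars (n : ℕ) (hn : 9 ≤ n) :
    ∃ G : GeomGraph, G.IsGeometric ∧
      ConvexIndependent ℝ ((↑) : G.verts → Pt) ∧
      G.verts.card = 2 * n + 2 ∧
      (∃ (V₁ V₂ : Finset Pt) (c₁ c₂ : Pt),
        Disjoint V₁ V₂ ∧ G.verts = V₁ ∪ V₂ ∧ V₁.card = n + 1 ∧ V₂.card = n + 1 ∧
        c₁ ∈ V₁ ∧ c₂ ∈ V₂ ∧
        G.edges = (V₁.erase c₁).image (fun w => s(c₁, w)) ∪
          (V₂.erase c₂).image (fun w => s(c₂, w))) ∧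
      (DJpairs G).card = n ^ 2 ∧
      (1 / 2 : ℝ) * (∑ v ∈ G.verts, ((deg G v).choose 3 : ℝ)) = (n.choose 3 : ℝ) ∧
      ((n : ℝ) ^ 2 < (n.choose 3 : ℝ) ∧
        ¬ ((DJpairs G).card : ℝ) ≥ (1 / 2 : ℝ) * ∑ v ∈ G.verts, ((deg G v).choose 3 : ℝ)) := by
  have hnR : (0 : ℝ) ≤ (n : ℝ) := Nat.cast_nonneg n
  refine ⟨GG n, ?_, ?_, ?_, ?_, cardDJ n, ?_, ?_, ?_⟩
  · -- IsGeometric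
    constructor
    · intro e he
      have key : ∀ (c w : Pt), c ∈ (GG n).verts → w ∈ (GG n).verts → c ≠ w →
          ¬ (s(c, w) : Sym2 Pt).IsDiag ∧ ∀ p ∈ (s(c, w) : Sym2 Pt), p ∈ (GG n).verts := by
        intro c w hc hw hne
        refine ⟨by simpa using hne, ?_⟩
        intro p hp
        rcases Sym2.mem_iff.mp hp with rfl | rfl
        · exact hc
        · exact hw
      rcases Finset.mem_union.mp he with h | h
      · obtain ⟨w, hw, rfl⟩ := Finset.mem_image.mp h
        exact key _ _ (Finset.mem_union_left _ (cone_mem n))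
          (Finset.mem_union_left _ (Finset.mem_of_mem_erase hw))
          (Finset.ne_of_mem_erase hw).symm
      · obtain ⟨w, hw, rfl⟩ := Finset.mem_image.mp h
        exact key _ _ (Finset.mem_union_right _ (ctwo_mem n))
          (Finset.mem_union_right _ (Finset.mem_of_mem_erase hw))
          (Finset.ne_of_mem_erase hw).symm
    · have hvert : ∀ x ∈ (GG n).verts, ∃ t : ℝ, x = pp t := by
        intro x hx
        rcases Finset.mem_union.mp hx with h | h
        · obtain ⟨k, -, rfl⟩ := Finset.mem_image.mp h
          exact ⟨k, rfl⟩
        · obtain ⟨k, -, rfl⟩ := Finset.mem_image.mp h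
          exact ⟨k, rfl⟩
      intro p hp q hq r hr hpq hpr hqr
      obtain ⟨a, rfl⟩ := hvert p hp
      obtain ⟨b, rfl⟩ := hvert q hq
      obtain ⟨c, rfl⟩ := hvert r hr
      exact pp_not_collinear (fun h => hpq (by rw [h])) (fun h => hpr (by rw [h]))
        (fun h => hqr (by rw [h]))
  · -- ConvexIndependent
    have hvert : ∀ x ∈ (GG n).verts, ∃ t : ℝ, x = pp t := by
      intro x hx
      rcases Finset.mem_union.mp hx with h | h
      · obtain ⟨k, -, rfl⟩ := Finset.mem_image.mp h
        exact ⟨k, rfl⟩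
      · obtain ⟨k, -, rfl⟩ := Finset.mem_image.mp h
        exact ⟨k, rfl⟩
    intro s x hx
    by_contra hxs
    obtain ⟨t, hxt⟩ : ∃ t, (x : Pt) = pp t := hvert x x.2
    refine pp_not_mem_hull t _ ?_ (hxt ▸ hx)
    rintro y ⟨z, hz, rfl⟩
    obtain ⟨u, hu⟩ := hvert z z.2
    refine ⟨u, ?_, hu⟩
    intro hut
    apply hxs
    have hzx : z = x := Subtype.ext (by rw [hu, hut, ← hxt])
    rwa [hzx] at hz
  · -- card verts
    show (Vone n ∪ Vtwo n).card = 2 * n + 2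
    rw [Finset.card_union_of_disjoint (disjV n), cardV1, cardV2]
    omega
  · -- structure
    exact ⟨Vone n, Vtwo n, cone, ctwo n, disjV n, rfl, cardV1 n, cardV2 n,
      cone_mem n, ctwo_mem n, rfl⟩
  · -- sum of choose
    have hsum : ∑ v ∈ (GG n).verts, ((deg (GG n) v).choose 3 : ℝ)
        = 2 * (n.choose 3 : ℝ) := by
      show ∑ v ∈ Vone n ∪ Vtwo n, ((deg (GG n) v).choose 3 : ℝ) = _
      rw [Finset.sum_union (disjV n)]
      have h1 : ∑ v ∈ Vone n, ((deg (GG n) v).choose 3 : ℝ) = (n.choose 3 : ℝ) := by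
        rw [← Finset.sum_erase_add _ _ (cone_mem n)]
        have hz : ∑ v ∈ (Vone n).erase cone, ((deg (GG n) v).choose 3 : ℝ) = 0 := by
          refine Finset.sum_eq_zero fun w hw => ?_
          rw [deg, nbhd_leaf1 hw, Finset.card_singleton,
            show Nat.choose 1 3 = 0 by decide, Nat.cast_zero]
        rw [hz, zero_add, deg, nbhd_cone, Finset.card_erase_of_mem (cone_mem n), cardV1,
          Nat.add_sub_cancel]
      have h2 : ∑ v ∈ Vtwo n, ((deg (GG n) v).choose 3 : ℝ) = (n.choose 3 : ℝ) := by
        rw [← Finset.sum_erase_add _ _ (ctwo_mem n)]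
        have hz : ∑ v ∈ (Vtwo n).erase (ctwo n), ((deg (GG n) v).choose 3 : ℝ) = 0 := by
          refine Finset.sum_eq_zero fun w hw => ?_
          rw [deg, nbhd_leaf2 hw, Finset.card_singleton,
            show Nat.choose 1 3 = 0 by decide, Nat.cast_zero]
        rw [hz, zero_add, deg, nbhd_ctwo, Finset.card_erase_of_mem (ctwo_mem n), cardV2,
          Nat.add_sub_cancel]
      rw [h1, h2]
      ring
    rw [hsum]
    ring
  · -- n^2 < choose
    exact_mod_cast choose_three_gt n hn
  · -- inequality fails
    have hlt : (n : ℝ) ^ 2 < (n.choose 3 : ℝ) := by exact_mod_cast choose_three_gt n hn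
    have hsum : ∑ v ∈ (GG n).verts, ((deg (GG n) v).choose 3 : ℝ)
        = 2 * (n.choose 3 : ℝ) := by
      show ∑ v ∈ Vone n ∪ Vtwo n, ((deg (GG n) v).choose 3 : ℝ) = _
      rw [Finset.sum_union (disjV n)]
      have h1 : ∑ v ∈ Vone n, ((deg (GG n) v).choose 3 : ℝ) = (n.choose 3 : ℝ) := by
        rw [← Finset.sum_erase_add _ _ (cone_mem n)]
        have hz : ∑ v ∈ (Vone n).erase cone, ((deg (GG n) v).choose 3 : ℝ) = 0 := by
          refine Finset.sum_eq_zero fun w hw => ?_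
          rw [deg, nbhd_leaf1 hw, Finset.card_singleton,
            show Nat.choose 1 3 = 0 by decide, Nat.cast_zero]
        rw [hz, zero_add, deg, nbhd_cone, Finset.card_erase_of_mem (cone_mem n), cardV1,
          Nat.add_sub_cancel]
      have h2 : ∑ v ∈ Vtwo n, ((deg (GG n) v).choose 3 : ℝ) = (n.choose 3 : ℝ) := by
        rw [← Finset.sum_erase_add _ _ (ctwo_mem n)]
        have hz : ∑ v ∈ (Vtwo n).erase (ctwo n), ((deg (GG n) v).choose 3 : ℝ) = 0 := by
          refine Finset.sum_eq_zero fun w hw => ?_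
          rw [deg, nbhd_leaf2 hw, Finset.card_singleton,
            show Nat.choose 1 3 = 0 by decide, Nat.cast_zero]
        rw [hz, zero_add, deg, nbhd_ctwo, Finset.card_erase_of_mem (ctwo_mem n), cardV2,
          Nat.add_sub_cancel]
      rw [h1, h2]
      ring
    rw [hsum, cardDJ n, not_le]
    push_cast
    linarith


end
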